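/- arXiv:1608.07860 — 2 statements merged into one kernel-verified Lean document; each statement's English description precedes it below -/
import Mathlib

section
/- Let f be a measurable function on ℝ, let 1 ≤ p < ∞, and suppose f(x + π/2) − f(x) ∈ Lᵖ(ℝ) and f(x)·sin(x) ∈ Lᵖ(ℝ). Then f ∈ Lᵖ(ℝ). -/
/-! Since `sin (x + π/2) = cos x`, translating `f · sin` by `π/2` and correcting by the bounded
multiple `cos · (f (· + π/2) - f)` of the difference shows `f · cos ∈ Lᵖ`. Then
`f = sin · (f · sin) + cos · (f · cos)` is in `Lᵖ`, as `sin` and `cos` are bounded. -/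

open Real MeasureTheory

lemma memLp_top_sin {μ : Measure ℝ} : MemLp sin ⊤ μ :=
  memLp_top_of_bound continuous_sin.aestronglyMeasurable 1
    (ae_of_all _ fun x => by simpa using abs_sin_le_one x)

lemma memLp_top_cos {μ : Measure ℝ} : MemLp cos ⊤ μ :=
  memLp_top_of_bound continuous_cos.aestronglyMeasurable 1
    (ae_of_all _ fun x => by simpa using abs_cos_le_one x)

namespace MeasureTheory.MemLp

variable {μ : Measure ℝ} {p : ENNReal} {f : ℝ → ℝ}

lemma of_mul_sin_of_mul_cos (hs : MemLp (fun x => f x * sin x) p μ)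
    (hc : MemLp (fun x => f x * cos x) p μ) : MemLp f p μ := by
  have hf : f = fun x => sin x * (f x * sin x) + cos x * (f x * cos x) := by
    funext x
    linear_combination (-f x) * sin_sq_add_cos_sq x
  rw [hf]
  exact (hs.mul' memLp_top_sin).add (hc.mul' memLp_top_cos)

lemma mul_cos_of_sub_add_pi_div_two [μ.IsAddRightInvariant]
    (hs : MemLp (fun x => f x * sin x) p μ)
    (hΔ : MemLp (fun x => f (x + π / 2) - f x) p μ) :
    MemLp (fun x => f x * cos x) p μ := by
  have hshift : MemLp (fun x => f (x + π / 2) * sin (x + π / 2)) p μ :=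
    hs.comp_measurePreserving (measurePreserving_add_right μ (π / 2))
  have hf : (fun x => f x * cos x) =
      fun x => f (x + π / 2) * sin (x + π / 2) - cos x * (f (x + π / 2) - f x) := by
    funext x
    rw [sin_add_pi_div_two]
    ring
  rw [hf]
  exact hshift.sub (hΔ.mul' memLp_top_cos)

end MeasureTheory.MemLp

theorem shifts_sine_Lp_general (p : ℝ) (f : ℝ → ℝ)
    (hΔ : MemLp (fun x => f (x + π / 2) - f x) (ENNReal.ofReal p) volume)
    (hs : MemLp (fun x => f x * Real.sin x) (ENNReal.ofReal p) volume) :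
    MemLp f (ENNReal.ofReal p) volume :=
  hs.of_mul_sin_of_mul_cos (hs.mul_cos_of_sub_add_pi_div_two hΔ)

theorem shifts_sine_Lp (p : ℝ) (hp : 1 ≤ p) (f : ℝ → ℝ) (hf : Measurable f)
    (hΔ : MemLp (fun x => f (x + π / 2) - f x) (ENNReal.ofReal p) volume)
    (hs : MemLp (fun x => f x * Real.sin x) (ENNReal.ofReal p) volume) :
    MemLp f (ENNReal.ofReal p) volume :=
  shifts_sine_Lp_general p f hΔ hs
end

section
/- Define f : ℝ → ℝ by f(x) = 1 if x ∈ ⋃_{k∈ℤ} [kπ, kπ + a_k] and f(x) = 0 otherwise, where a₀ = 1/4 and a_k = 1/(5|k|) for k ≠ 0. Then ∫_ℝ |f(x) − f(x + π)|² dx ≤ 1/2 < ∞, so x ↦ f(x) − f(x + π) is in L²(ℝ). -/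
/-!
Since `fCtr` only takes the values `0` and `1`, `|fCtr x - fCtr (x + π)|²` is the indicator
of `S ∆ (S - π)`, where `S = ⋃ₖ [kπ, kπ + aₖ]`. A point of this symmetric difference lies
between `jπ + a_{j+1}` and `jπ + a_j` for some `j`, so its measure is at most
`∑ⱼ |aⱼ - a_{j+1}|`. As `aₖ` decreases on `k ≥ 0` and increases on `k < 0`, both halves of
this sum telescope to at most `a₀`, giving `2 a₀ = 1/2`.
-/

open Real MeasureTheory

noncomputable def aSeq (k : ℤ) : ℝ := if k = 0 then 1 / 4 else 1 / (5 * |(k : ℝ)|)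

noncomputable def fCtr : ℝ → ℝ :=
  Set.indicator (⋃ k : ℤ, Set.Icc ((k : ℝ) * π) ((k : ℝ) * π + aSeq k)) 1

open Set
open scoped symmDiff

theorem ofReal_sq_abs_indicator_sub_indicator {α : Type*} (s t : Set α) (x : α) :
    ENNReal.ofReal (|s.indicator 1 x - t.indicator 1 x| ^ 2) = (s ∆ t).indicator 1 x := by
  by_cases hs : x ∈ s <;> by_cases ht : x ∈ t <;> simp [mem_symmDiff, *]

def intervalUnion (c : ℝ) (a : ℤ → ℝ) : Set ℝ := ⋃ k : ℤ, Icc (k * c) (k * c + a k)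

section IntervalUnion

variable (c : ℝ) (a : ℤ → ℝ)

theorem measurableSet_intervalUnion : MeasurableSet (intervalUnion c a) :=
  .iUnion fun _ ↦ measurableSet_Icc

theorem add_mem_intervalUnion_iff (x : ℝ) :
    x + c ∈ intervalUnion c a ↔ ∃ k : ℤ, x ∈ Icc (k * c) (k * c + a (k + 1)) := by
  simp only [intervalUnion, mem_iUnion, mem_Icc]
  constructor
  · rintro ⟨k, h₁, h₂⟩
    exact ⟨k - 1, by rw [sub_add_cancel]; push_cast; constructor <;> linarith⟩
  · rintro ⟨k, h₁, h₂⟩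
    exact ⟨k + 1, by push_cast; constructor <;> linarith⟩

theorem symmDiff_preimage_add_subset :
    intervalUnion c a ∆ ((· + c) ⁻¹' intervalUnion c a) ⊆
      ⋃ k : ℤ, uIcc (k * c + a (k + 1)) (k * c + a k) := by
  intro x hx
  simp only [mem_iUnion, uIcc, mem_Icc]
  rcases hx with ⟨hS, hT⟩ | ⟨hT, hS⟩
  · obtain ⟨k, h₁, h₂⟩ := mem_iUnion.1 hS
    have : ¬ x ≤ k * c + a (k + 1) := fun h ↦
      hT ((add_mem_intervalUnion_iff c a x).2 ⟨k, h₁, h⟩)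
    exact ⟨k, min_le_iff.2 (by grind), le_max_iff.2 (by grind)⟩
  · obtain ⟨k, h₁, h₂⟩ := (add_mem_intervalUnion_iff c a x).1 hT
    have : ¬ x ≤ k * c + a k := fun h ↦ hS (mem_iUnion.2 ⟨k, h₁, h⟩)
    exact ⟨k, min_le_iff.2 (by grind), le_max_iff.2 (by grind)⟩

theorem volume_symmDiff_preimage_add_le :
    volume (intervalUnion c a ∆ ((· + c) ⁻¹' intervalUnion c a)) ≤
      ∑' k : ℤ, ENNReal.ofReal |a k - a (k + 1)| :=
  calc _ ≤ volume (⋃ k : ℤ, uIcc (k * c + a (k + 1)) (k * c + a k)) :=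
        measure_mono (symmDiff_preimage_add_subset c a)
    _ ≤ ∑' k : ℤ, volume (uIcc (k * c + a (k + 1)) (k * c + a k)) := measure_iUnion_le _
    _ = _ := by simp only [Real.volume_interval, add_sub_add_left_eq_sub]

end IntervalUnion

theorem tsum_ofReal_sub_succ_le {a : ℕ → ℝ} (ha : ∀ n, a (n + 1) ≤ a n)
    (h₀ : ∀ n, 0 ≤ a n) :
    ∑' n, ENNReal.ofReal (a n - a (n + 1)) ≤ ENNReal.ofReal (a 0) := by
  refine ENNReal.tsum_le_of_sum_range_le fun N ↦ ?_
  rw [← ENNReal.ofReal_sum_of_nonneg fun n _ ↦ sub_nonneg.2 (ha n), Finset.sum_range_sub']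
  exact ENNReal.ofReal_le_ofReal (sub_le_self _ (h₀ N))

theorem tsum_int_ofReal_abs_sub_succ_le {a : ℤ → ℝ} (h₀ : ∀ k, 0 ≤ a k)
    (hpos : ∀ k, 0 ≤ k → a (k + 1) ≤ a k) (hneg : ∀ k, k < 0 → a k ≤ a (k + 1)) :
    ∑' k : ℤ, ENNReal.ofReal |a k - a (k + 1)| ≤ ENNReal.ofReal (2 * a 0) := by
  rw [tsum_of_nat_of_neg_add_one ENNReal.summable ENNReal.summable, two_mul,
    ENNReal.ofReal_add (h₀ 0) (h₀ 0)]
  gcongr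
  · calc _ = ∑' n : ℕ, ENNReal.ofReal (a n - a (n + 1)) := by
          refine tsum_congr fun n ↦ congrArg _ ?_
          exact abs_of_nonneg (sub_nonneg.2 (hpos n n.cast_nonneg))
      _ ≤ _ := tsum_ofReal_sub_succ_le (fun n ↦ hpos n n.cast_nonneg) fun n ↦ h₀ n
  · calc _ = ∑' n : ℕ, ENNReal.ofReal (a (-n) - a (-(n + 1 : ℕ))) := by
          refine tsum_congr fun n ↦ congrArg _ ?_
          rw [abs_sub_comm, abs_of_nonneg] <;> push_cast
          · ring_nf
          · simpa using hneg (-(n + 1)) (by omega)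
      _ ≤ _ := by
        refine tsum_ofReal_sub_succ_le (a := fun n : ℕ ↦ a (-n)) (fun n ↦ ?_) fun n ↦ h₀ _
        simpa using hneg (-(n + 1)) (by omega)

theorem aSeq_nonneg (k : ℤ) : 0 ≤ aSeq k := by
  unfold aSeq; split <;> positivity

theorem aSeq_neg (k : ℤ) : aSeq (-k) = aSeq k := by
  simp [aSeq]

theorem aSeq_succ_le {k : ℤ} (hk : 0 ≤ k) : aSeq (k + 1) ≤ aSeq k := by
  have hk₁ : (0 : ℝ) < k + 1 := by exact_mod_cast Int.lt_add_one_iff.2 hk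
  rcases hk.eq_or_lt with rfl | hk₀
  · norm_num [aSeq]
  · have hk₀' : (0 : ℝ) < k := Int.cast_pos.2 hk₀
    rw [aSeq, aSeq, if_neg (by omega), if_neg hk₀.ne']
    push_cast
    rw [abs_of_pos hk₁, abs_of_pos hk₀']
    gcongr
    linarith

theorem le_aSeq_succ {k : ℤ} (hk : k < 0) : aSeq k ≤ aSeq (k + 1) := by
  simpa [← aSeq_neg k, ← aSeq_neg (k + 1), sub_eq_add_neg, add_comm] using
    aSeq_succ_le (k := -(k + 1)) (by omega)

theorem fCtr_shift_L2 :
    (∫⁻ x : ℝ, ENNReal.ofReal (|fCtr x - fCtr (x + π)| ^ 2)) ≤ ENNReal.ofReal (1 / 2) ∧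
    MemLp (fun x => fCtr x - fCtr (x + π)) 2 volume := by
  set S := intervalUnion π aSeq
  set T := (· + π) ⁻¹' S
  have hS : MeasurableSet S := measurableSet_intervalUnion π aSeq
  have hT : MeasurableSet T := measurable_add_const π hS
  have hST : MeasurableSet (S ∆ T) := hS.symmDiff hT
  have hvol : volume (S ∆ T) ≤ ENNReal.ofReal (1 / 2) :=
    calc _ ≤ ∑' k : ℤ, ENNReal.ofReal |aSeq k - aSeq (k + 1)| :=
          volume_symmDiff_preimage_add_le π aSeq
      _ ≤ ENNReal.ofReal (2 * aSeq 0) :=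
          tsum_int_ofReal_abs_sub_succ_le aSeq_nonneg (fun _ ↦ aSeq_succ_le)
            fun _ ↦ le_aSeq_succ
      _ = _ := by norm_num [aSeq]
  have hf : (fun x ↦ fCtr x - fCtr (x + π)) = S.indicator 1 - T.indicator 1 := rfl
  refine ⟨?_, ?_⟩
  · calc _ = ∫⁻ x, (S ∆ T).indicator 1 x :=
          lintegral_congr fun x ↦ ofReal_sq_abs_indicator_sub_indicator S T x
      _ = volume (S ∆ T) := lintegral_indicator_one hST
      _ ≤ _ := hvol
  · rw [hf]
    have hmeas : Measurable (S.indicator (1 : ℝ → ℝ) - T.indicator 1) :=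
      (measurable_one.indicator hS).sub (measurable_one.indicator hT)
    refine ⟨hmeas.aestronglyMeasurable, ?_⟩
    rw [eLpNorm_indicator_sub_indicator]
    exact (memLp_indicator_const 2 hST (1 : ℝ)
      (Or.inr (hvol.trans_lt ENNReal.ofReal_lt_top).ne)).eLpNorm_lt_top
end
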